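/- In the symmetric group S₆, the permutations σ₁ = (1 2 3), σ₂ = (2 5 3), σ₃ = (3 6 5), σ₄ = (3 5 6), σ₅ = (1 4 5), σ₆ = (3 5 4) each have cycle structure [1,1,1,3], satisfy σ₁·σ₂·σ₃·σ₄·σ₅·σ₆ = identity, and the subgroup they generate acts transitively on {1,…,6}. Hence there exists a transitive product-one tuple in S₆ of length 6 with ramification type [[1³,3]⁶]. -/

import Mathlib

/-- Cycle structure of a permutation of `Fin d`, including fixed points as 1-cycles. -/
def fullCycleType {d : ℕ} (σ : Equiv.Perm (Fin d)) : Multiset ℕ :=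
  σ.cycleType + Multiset.replicate (d - σ.cycleType.sum) 1

/-- Product of a list of permutations, composed left-to-right
(apply the first permutation first). -/
def seqProd {d : ℕ} (l : List (Equiv.Perm (Fin d))) : Equiv.Perm (Fin d) :=
  l.foldr (fun σ acc => σ.trans acc) (Equiv.refl (Fin d))


def σ1 : Equiv.Perm (Fin 6) := c[0, 1, 2]

def σ2 : Equiv.Perm (Fin 6) := c[1, 4, 2]

def σ3 : Equiv.Perm (Fin 6) := c[2, 5, 4]

def σ4 : Equiv.Perm (Fin 6) := c[2, 4, 5]

def σ5 : Equiv.Perm (Fin 6) := c[0, 3, 4]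

def σ6 : Equiv.Perm (Fin 6) := c[2, 4, 3]


/-! Each `σᵢ` is a 3-cycle, so its full cycle type is one 3-cycle and three fixed points. The
product is evaluated directly, and transitivity reduces to reaching every point from `0`, which
`1, σ1, σ1², σ5, σ5², σ3σ1²` already do. -/

open Equiv

theorem List.cycleType_formPerm_of_nodup {α : Type*} [Fintype α] [DecidableEq α] {l : List α}
    (hl : l.Nodup) (hn : 2 ≤ l.length) : l.formPerm.cycleType = {l.length} := by
  have hsingleton : ∀ x, l ≠ [x] := by
    rintro x rfl
    simp at hn
  rw [(List.isCycle_formPerm hl hn).cycleType, List.support_formPerm_of_nodup l hl hsingleton,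
    List.card_toFinset, hl.dedup]

theorem fullCycleType_of_cycleType_eq_singleton {d k : ℕ} {σ : Perm (Fin d)}
    (h : σ.cycleType = {k}) : fullCycleType σ = k ::ₘ Multiset.replicate (d - k) 1 := by
  simp [fullCycleType, h]

theorem fullCycleType_formPerm {d : ℕ} {l : List (Fin d)} (hl : l.Nodup) (hn : 2 ≤ l.length) :
    fullCycleType l.formPerm = l.length ::ₘ Multiset.replicate (d - l.length) 1 :=
  fullCycleType_of_cycleType_eq_singleton (List.cycleType_formPerm_of_nodup hl hn)

theorem fullCycleType_threeCycle {a b c : Fin 6} (h : [a, b, c].Nodup) :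
    fullCycleType [a, b, c].formPerm = ({1, 1, 1, 3} : Multiset ℕ) := by
  rw [fullCycleType_formPerm h (by simp)]
  exact (by decide : (3 ::ₘ Multiset.replicate (6 - 3) 1 : Multiset ℕ) = {1, 1, 1, 3})

theorem Subgroup.exists_mem_apply_eq_of_forall_apply_base {α : Type*} {H : Subgroup (Perm α)}
    (a : α) (h : ∀ y, ∃ g ∈ H, g a = y) (x y : α) : ∃ g ∈ H, g x = y := by
  obtain ⟨gx, hgx, rfl⟩ := h x
  obtain ⟨gy, hgy, rfl⟩ := h y
  exact ⟨gy * gx⁻¹, mul_mem hgy (inv_mem hgx), by simp⟩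

theorem fullCycleType_σ :
    fullCycleType σ1 = ({1, 1, 1, 3} : Multiset ℕ) ∧ fullCycleType σ2 = ({1, 1, 1, 3} : Multiset ℕ) ∧
      fullCycleType σ3 = ({1, 1, 1, 3} : Multiset ℕ) ∧ fullCycleType σ4 = ({1, 1, 1, 3} : Multiset ℕ) ∧
      fullCycleType σ5 = ({1, 1, 1, 3} : Multiset ℕ) ∧ fullCycleType σ6 = ({1, 1, 1, 3} : Multiset ℕ) :=
  ⟨fullCycleType_threeCycle (by decide), fullCycleType_threeCycle (by decide),
    fullCycleType_threeCycle (by decide), fullCycleType_threeCycle (by decide),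
    fullCycleType_threeCycle (by decide), fullCycleType_threeCycle (by decide)⟩

theorem seqProd_σ_eq_refl : seqProd [σ1, σ2, σ3, σ4, σ5, σ6] = Equiv.refl (Fin 6) := by
  decide

theorem exists_mem_closure_σ_apply_eq (x y : Fin 6) :
    ∃ g ∈ Subgroup.closure ({σ1, σ2, σ3, σ4, σ5, σ6} : Set (Perm (Fin 6))), g x = y := by
  set H := Subgroup.closure ({σ1, σ2, σ3, σ4, σ5, σ6} : Set (Perm (Fin 6)))
  have h1 : σ1 ∈ H := Subgroup.subset_closure (by simp)
  have h3 : σ3 ∈ H := Subgroup.subset_closure (by simp)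
  have h5 : σ5 ∈ H := Subgroup.subset_closure (by simp)
  refine Subgroup.exists_mem_apply_eq_of_forall_apply_base 0 (fun y => ?_) x y
  fin_cases y
  · exact ⟨1, one_mem H, rfl⟩
  · exact ⟨σ1, h1, by decide⟩
  · exact ⟨σ1 * σ1, mul_mem h1 h1, by decide⟩
  · exact ⟨σ5, h5, by decide⟩
  · exact ⟨σ5 * σ5, mul_mem h5 h5, by decide⟩
  · exact ⟨σ3 * σ1 * σ1, mul_mem (mul_mem h3 h1) h1, by decide⟩

theorem stmt15 :
    (fullCycleType σ1 = ({1, 1, 1, 3} : Multiset ℕ) ∧ fullCycleType σ2 = ({1, 1, 1, 3} : Multiset ℕ) ∧ fullCycleType σ3 = ({1, 1, 1, 3} : Multiset ℕ) ∧ fullCycleType σ4 = ({1, 1, 1, 3} : Multiset ℕ) ∧ fullCycleType σ5 = ({1, 1, 1, 3} : Multiset ℕ) ∧ fullCycleType σ6 = ({1, 1, 1, 3} : Multiset ℕ)) ∧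
    seqProd [σ1, σ2, σ3, σ4, σ5, σ6] = Equiv.refl (Fin 6) ∧
    (∀ x y : Fin 6, ∃ g ∈ Subgroup.closure ({σ1, σ2, σ3, σ4, σ5, σ6} : Set (Equiv.Perm (Fin 6))), g x = y) ∧
    (∃ τ : Fin 6 → Equiv.Perm (Fin 6),
      (∀ i, fullCycleType (τ i) = ({1, 1, 1, 3} : Multiset ℕ)) ∧
      seqProd (List.ofFn τ) = Equiv.refl (Fin 6) ∧
      (∀ x y : Fin 6, ∃ g ∈ Subgroup.closure (Set.range τ), g x = y)) := by
  have hct := fullCycleType_σ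
  have hofFn : List.ofFn ![σ1, σ2, σ3, σ4, σ5, σ6] = [σ1, σ2, σ3, σ4, σ5, σ6] := rfl
  have hrange : Set.range ![σ1, σ2, σ3, σ4, σ5, σ6] = {σ1, σ2, σ3, σ4, σ5, σ6} := by
    simp only [Matrix.range_cons, Matrix.range_empty, Set.union_empty, Set.singleton_union]
  refine ⟨hct, seqProd_σ_eq_refl, exists_mem_closure_σ_apply_eq, ![σ1, σ2, σ3, σ4, σ5, σ6], ?_,
    hofFn ▸ seqProd_σ_eq_refl, hrange ▸ exists_mem_closure_σ_apply_eq⟩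
  obtain ⟨h1, h2, h3, h4, h5, h6⟩ := hct
  intro i
  fin_cases i <;> assumption
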